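/- Let C be an additive category with pseudokernels and pseudocokernels, and let B be a full subcategory of C. The following are equivalent: (1) the full subcategory B̂ of the Karoubi envelope of C, consisting of the objects (X, e) with X in B, is coreflective in the Karoubi envelope of C; (2) B is precovering in C and every morphism between objects of B has a pseudocokernel in C that belongs to B. -/

import Mathlib

open CategoryTheory Limits

universe w v u

namespace PaperStmt

variable {C : Type u} [Category.{v} C]

/-- The subcategory (object property) `B` is closed under isomorphisms. -/
def ClosedUnderIso (B : C → Prop) : Prop :=
  ∀ ⦃X Y : C⦄, (X ≅ Y) → B X → B Y

/-- `B` is closed under direct summands (retracts). -/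
def ClosedUnderSummands (B : C → Prop) : Prop :=
  ∀ ⦃X Y : C⦄, B X → (∃ (s : Y ⟶ X) (r : X ⟶ Y), s ≫ r = 𝟙 Y) → B Y

/-- `f : X ⟶ A` is a `B`-precover of `A`. -/
def IsPrecover (B : C → Prop) {X A : C} (f : X ⟶ A) : Prop :=
  B X ∧ ∀ ⦃Y : C⦄, B Y → ∀ g : Y ⟶ A, ∃ h : Y ⟶ X, h ≫ f = g

/-- `B` is a precovering subcategory. -/
def Precovering (B : C → Prop) : Prop :=
  ∀ A : C, ∃ (X : C) (f : X ⟶ A), IsPrecover B f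

/-- `f : A ⟶ X` is a `B`-preenvelope of `A`. -/
def IsPreenvelope (B : C → Prop) {A X : C} (f : A ⟶ X) : Prop :=
  B X ∧ ∀ ⦃Y : C⦄, B Y → ∀ g : A ⟶ Y, ∃ h : X ⟶ Y, f ≫ h = g

/-- `B` is a preenveloping subcategory. -/
def Preenveloping (B : C → Prop) : Prop :=
  ∀ A : C, ∃ (X : C) (f : A ⟶ X), IsPreenvelope B f

/-- `f : X ⟶ A` is a `B`-coreflection of `A`. -/
def IsCoreflection (B : C → Prop) {X A : C} (f : X ⟶ A) : Prop :=
  B X ∧ ∀ ⦃Y : C⦄, B Y → ∀ g : Y ⟶ A, ∃! h : Y ⟶ X, h ≫ f = g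

/-- `B` is a coreflective subcategory: the inclusion has a right adjoint. -/
def IsCoreflectiveSub (B : C → Prop) : Prop :=
  (ObjectProperty.ι B).IsLeftAdjoint

/-- `B` is a reflective subcategory: the inclusion has a left adjoint. -/
def IsReflectiveSub (B : C → Prop) : Prop :=
  (ObjectProperty.ι B).IsRightAdjoint

section Zero

variable [HasZeroMorphisms C]

/-- `k` is a pseudokernel of `f`. -/
def IsPseudokernel {K X Y : C} (f : X ⟶ Y) (k : K ⟶ X) : Prop :=
  k ≫ f = 0 ∧ ∀ ⦃K' : C⦄ (k' : K' ⟶ X), k' ≫ f = 0 → ∃ t : K' ⟶ K, t ≫ k = k'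

/-- `c` is a pseudocokernel of `f`. -/
def IsPseudocokernel {X Y Q : C} (f : X ⟶ Y) (c : Y ⟶ Q) : Prop :=
  f ≫ c = 0 ∧ ∀ ⦃Q' : C⦄ (c' : Y ⟶ Q'), f ≫ c' = 0 → ∃ t : Q ⟶ Q', c ≫ t = c'

end Zero

/-- `C` has pseudokernels. -/
def HasPseudokernels (C : Type u) [Category.{v} C] [HasZeroMorphisms C] : Prop :=
  ∀ ⦃X Y : C⦄ (f : X ⟶ Y), ∃ (K : C) (k : K ⟶ X), IsPseudokernel f k

/-- `C` has pseudocokernels. -/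
def HasPseudocokernels (C : Type u) [Category.{v} C] [HasZeroMorphisms C] : Prop :=
  ∀ ⦃X Y : C⦄ (f : X ⟶ Y), ∃ (Q : C) (c : Y ⟶ Q), IsPseudocokernel f c

end PaperStmt

/-!
A subcategory `B` is coreflective iff every object `A` has a `B`-precover `f` that kills no
nonzero map out of an object of `B`. Given a pseudocokernel `c` of a map between objects of `B`,
the lift of `c` through such a coreflection is again a pseudocokernel, now with vertex in `B`.
Conversely, take a precover `g₀ : X₀ ⟶ A`, a `B`-precover `d` of a pseudokernel of `g₀` and a
pseudocokernel `c : X₀ ⟶ Q` of `d` with `Q` in `B`. Then `g₀ = c ≫ g`, and if `u` lifts `g`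
through `g₀`, then `e = u ≫ c` is an idempotent of `Q` with `e ≫ g = g` that annihilates every map
from `B` killed by `g`. Splitting `e`, which is possible in `B̂` inside the Karoubi envelope, turns
`g` into a coreflection.
-/

namespace PaperStmt

open CategoryTheory.Idempotents

section Coreflection

variable {D : Type*} [Category D] {B : D → Prop}

lemma isCoreflection_iff_isTerminal {X A : D} (hX : B X) (f : X ⟶ A) :
    IsCoreflection B f ↔
      Nonempty (IsTerminal (CostructuredArrow.mk (S := ObjectProperty.ι B) (Y := ⟨X, hX⟩) f)) := by
  constructor
  · rintro ⟨-, hf⟩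
    refine ⟨IsTerminal.ofUniqueHom
      (fun Z => CostructuredArrow.homMk (ObjectProperty.homMk (hf Z.left.2 Z.hom).exists.choose)
        (hf Z.left.2 Z.hom).exists.choose_spec) fun Z m => ?_⟩
    ext
    exact (hf Z.left.2 Z.hom).unique (CostructuredArrow.w m) (hf Z.left.2 Z.hom).exists.choose_spec
  · rintro ⟨hT⟩
    refine ⟨hX, fun Y hY g => ?_⟩
    let Z := CostructuredArrow.mk (S := ObjectProperty.ι B) (Y := ⟨Y, hY⟩) g
    refine ⟨(hT.from Z).left.hom, CostructuredArrow.w (hT.from Z), fun h hh => ?_⟩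
    exact congrArg (fun m => m.left.hom)
      (hT.hom_ext (CostructuredArrow.homMk (f := Z) (ObjectProperty.homMk h) hh) (hT.from Z))

theorem isCoreflectiveSub_iff_forall_exists_isCoreflection :
    IsCoreflectiveSub B ↔ ∀ A : D, ∃ (X : D) (f : X ⟶ A), IsCoreflection B f := by
  refine isLeftAdjoint_iff_hasTerminal_costructuredArrow.trans (forall_congr' fun A => ?_)
  constructor
  · intro
    let T := ⊤_ CostructuredArrow (ObjectProperty.ι B) A
    exact ⟨_, T.hom, (isCoreflection_iff_isTerminal T.left.2 _).2 ⟨terminalIsTerminal⟩⟩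
  · rintro ⟨X, f, hf⟩
    exact ((isCoreflection_iff_isTerminal hf.1 f).1 hf).some.hasTerminal

lemma IsCoreflection.isPrecover {X A : D} {f : X ⟶ A} (hf : IsCoreflection B f) :
    IsPrecover B f :=
  ⟨hf.1, fun _ hY g => (hf.2 hY g).exists⟩

lemma IsCoreflectiveSub.precovering (h : IsCoreflectiveSub B) : Precovering B := fun A => by
  obtain ⟨X, f, hf⟩ := isCoreflectiveSub_iff_forall_exists_isCoreflection.1 h A
  exact ⟨X, f, hf.isPrecover⟩

def HasPseudocokernelsIn [HasZeroMorphisms D] (B : D → Prop) : Prop :=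
  ∀ ⦃X Y : D⦄, B X → B Y → ∀ f : X ⟶ Y, ∃ (Q : D) (c : Y ⟶ Q), B Q ∧ IsPseudocokernel f c

lemma isPseudocokernel_of_comp_isCoreflection [HasZeroMorphisms D] {X Y Q P : D} {f : X ⟶ Y}
    {c : Y ⟶ Q} (hc : IsPseudocokernel f c) {r : P ⟶ Q} (hr : IsCoreflection B r)
    (hX : B X) {s : Y ⟶ P} (hs : s ≫ r = c) : IsPseudocokernel f s := by
  refine ⟨(hr.2 hX 0).unique (by rw [Category.assoc, hs, hc.1]) zero_comp, fun Q' c' hc' => ?_⟩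
  obtain ⟨t, ht⟩ := hc.2 c' hc'
  exact ⟨r ≫ t, by rw [← Category.assoc, hs, ht]⟩

lemma IsCoreflectiveSub.hasPseudocokernelsIn [HasZeroMorphisms D] (hpc : HasPseudocokernels D)
    (h : IsCoreflectiveSub B) : HasPseudocokernelsIn B := fun X Y hX hY f => by
  obtain ⟨Q, c, hc⟩ := hpc f
  obtain ⟨P, r, hr⟩ := isCoreflectiveSub_iff_forall_exists_isCoreflection.1 h Q
  obtain ⟨s, hs, -⟩ := hr.2 hY c
  exact ⟨P, s, hr.1, isPseudocokernel_of_comp_isCoreflection hc hr hX hs⟩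

end Coreflection

section Construction

variable {D : Type*} [Category D] {B : D → Prop}

def IdempotentsSplitIn (B : D → Prop) : Prop :=
  ∀ ⦃Q : D⦄, B Q → ∀ e : Q ⟶ Q, e ≫ e = e →
    ∃ (Q' : D) (s : Q' ⟶ Q) (r : Q ⟶ Q'), B Q' ∧ s ≫ r = 𝟙 Q' ∧ r ≫ s = e

lemma exists_precover_pseudokernel [HasZeroMorphisms D] (hpk : HasPseudokernels D)
    (hprec : Precovering B) {X A : D} (f : X ⟶ A) :
    ∃ (K : D) (d : K ⟶ X), B K ∧ d ≫ f = 0 ∧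
      ∀ ⦃Y : D⦄, B Y → ∀ t : Y ⟶ X, t ≫ f = 0 → ∃ w : Y ⟶ K, w ≫ d = t := by
  obtain ⟨K, k, hk⟩ := hpk f
  obtain ⟨X₁, p, hp⟩ := hprec K
  refine ⟨X₁, p ≫ k, hp.1, by rw [Category.assoc, hk.1, comp_zero], fun Y hY t ht => ?_⟩
  obtain ⟨v, hv⟩ := hk.2 t ht
  obtain ⟨w, hw⟩ := hp.2 hY v
  exact ⟨w, by rw [← Category.assoc, hw, hv]⟩

variable [Preadditive D]

lemma isCoreflection_of_isPrecover {X A : D} {f : X ⟶ A} (hf : IsPrecover B f)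
    (hf0 : ∀ ⦃Y : D⦄, B Y → ∀ t : Y ⟶ X, t ≫ f = 0 → t = 0) : IsCoreflection B f := by
  refine ⟨hf.1, fun Y hY g => ?_⟩
  obtain ⟨h, hh⟩ := hf.2 hY g
  refine ⟨h, hh, fun t ht => sub_eq_zero.1 (hf0 hY _ ?_)⟩
  rw [Preadditive.sub_comp, ht, hh, sub_self]

lemma exists_precover_idempotent (hpk : HasPseudokernels D) (hprec : Precovering B)
    (hpcB : HasPseudocokernelsIn B) (A : D) :
    ∃ (Q : D) (g : Q ⟶ A) (e : Q ⟶ Q), IsPrecover B g ∧ e ≫ e = e ∧ e ≫ g = g ∧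
      ∀ ⦃Y : D⦄, B Y → ∀ h : Y ⟶ Q, h ≫ g = 0 → h ≫ e = 0 := by
  obtain ⟨X₀, g₀, hg₀⟩ := hprec A
  obtain ⟨X₁, d, hX₁, hd, hd_lift⟩ := exists_precover_pseudokernel hpk hprec g₀
  obtain ⟨Q, c, hQ, hc⟩ := hpcB hX₁ hg₀.1 d
  obtain ⟨g, hcg⟩ := hc.2 g₀ hd
  obtain ⟨u, hu⟩ := hg₀.2 hQ g
  have hc_kill : ∀ ⦃Y : D⦄, B Y → ∀ t : Y ⟶ X₀, t ≫ g₀ = 0 → t ≫ c = 0 := fun Y hY t ht => by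
    obtain ⟨w, rfl⟩ := hd_lift hY t ht
    rw [Category.assoc, hc.1, comp_zero]
  have hcuc : c ≫ u ≫ c = c := by
    have := hc_kill hg₀.1 (c ≫ u - 𝟙 X₀)
      (by rw [Preadditive.sub_comp, Category.assoc, hu, hcg, Category.id_comp, sub_self])
    rwa [Preadditive.sub_comp, Category.id_comp, sub_eq_zero, Category.assoc] at this
  refine ⟨Q, g, u ≫ c, ⟨hQ, fun Y hY g' => ?_⟩, by rw [Category.assoc, hcuc],
    by rw [Category.assoc, hcg, hu], fun Y hY h hh => ?_⟩
  · obtain ⟨a, ha⟩ := hg₀.2 hY g'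
    exact ⟨a ≫ c, by rw [Category.assoc, hcg, ha]⟩
  · rw [← Category.assoc]
    exact hc_kill hY _ (by rw [Category.assoc, hu, hh])

lemma isCoreflection_comp_of_split {Q Q' A : D} {g : Q ⟶ A} {e : Q ⟶ Q} (hg : IsPrecover B g)
    (heg : e ≫ g = g) (he_kill : ∀ ⦃Y : D⦄, B Y → ∀ h : Y ⟶ Q, h ≫ g = 0 → h ≫ e = 0)
    {s : Q' ⟶ Q} {r : Q ⟶ Q'} (hQ' : B Q') (hsr : s ≫ r = 𝟙 Q') (hrs : r ≫ s = e) :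
    IsCoreflection B (s ≫ g) := by
  refine isCoreflection_of_isPrecover ⟨hQ', fun Y hY g' => ?_⟩ fun Y hY t ht => ?_
  · obtain ⟨a, ha⟩ := hg.2 hY g'
    exact ⟨a ≫ r, by rw [Category.assoc, ← Category.assoc r, hrs, heg, ha]⟩
  · calc t = (t ≫ s) ≫ (r ≫ s) ≫ r := by simp only [Category.assoc, hsr, Category.comp_id]
      _ = 0 := by rw [hrs, ← Category.assoc, he_kill hY _ (by rw [Category.assoc, ht]), zero_comp]

theorem isCoreflectiveSub_of_precovering (hpk : HasPseudokernels D)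
    (hsplit : IdempotentsSplitIn B) (hprec : Precovering B) (hpcB : HasPseudocokernelsIn B) :
    IsCoreflectiveSub B :=
  isCoreflectiveSub_iff_forall_exists_isCoreflection.2 fun A => by
    obtain ⟨Q, g, e, hg, he, heg, he_kill⟩ := exists_precover_idempotent hpk hprec hpcB A
    obtain ⟨Q', s, r, hQ', hsr, hrs⟩ := hsplit hg.1 e he
    exact ⟨Q', s ≫ g, isCoreflection_comp_of_split hg heg he_kill hQ' hsr hrs⟩

end Construction

section Karoubi

variable {C : Type*} [Category C] {B : C → Prop}

lemma precovering_karoubi_iff :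
    Precovering (fun P : Karoubi C => B P.X) ↔ Precovering B := by
  constructor
  · intro h A
    obtain ⟨P, f, hP, hf⟩ := h ((toKaroubi C).obj A)
    refine ⟨P.X, f.f, hP, fun Y hY g => ?_⟩
    obtain ⟨t, ht⟩ := hf (Y := (toKaroubi C).obj Y) hY ((toKaroubi C).map g)
    exact ⟨t.f, by simpa using congrArg Karoubi.Hom.f ht⟩
  · intro h A
    obtain ⟨X, f, hX, hf⟩ := h A.X
    refine ⟨(toKaroubi C).obj X, ⟨f ≫ A.p, by simp⟩, hX, fun Y hY g => ?_⟩
    obtain ⟨t, ht⟩ := hf hY g.f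
    refine ⟨⟨Y.p ≫ t, by simp⟩, ?_⟩
    ext
    simp [reassoc_of% ht]

lemma idempotentsSplitIn_karoubi (B : C → Prop) :
    IdempotentsSplitIn (fun P : Karoubi C => B P.X) := by
  intro Q hQ e he
  have he' : e.f ≫ e.f = e.f := congrArg Karoubi.Hom.f he
  exact ⟨⟨Q.X, e.f, he'⟩, ⟨e.f, by simp [he']⟩, ⟨e.f, by simp [he']⟩, hQ, by ext; exact he',
    by ext; exact he'⟩

variable [Preadditive C]

lemma hasPseudokernels_karoubi (hpk : HasPseudokernels C) : HasPseudokernels (Karoubi C) := by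
  intro P Q α
  obtain ⟨K, k, hk⟩ := hpk α.f
  refine ⟨(toKaroubi C).obj K, ⟨k ≫ P.p, by simp⟩, ?_, fun K' k' hk' => ?_⟩
  · ext
    simp [hk.1]
  · obtain ⟨t, ht⟩ := hk.2 k'.f (Karoubi.hom_eq_zero_iff.1 hk')
    refine ⟨⟨K'.p ≫ t, by simp⟩, ?_⟩
    ext
    simp [reassoc_of% ht]

lemma isPseudocokernel_karoubi {P Q : Karoubi C} {α : P ⟶ Q} {Q₀ : C} {c : Q.X ⟶ Q₀}
    (hc : IsPseudocokernel α.f c) :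
    IsPseudocokernel α (⟨Q.p ≫ c, by simp⟩ : Q ⟶ (toKaroubi C).obj Q₀) := by
  refine ⟨?_, fun R c' hc' => ?_⟩
  · ext
    simp [hc.1]
  · obtain ⟨t, ht⟩ := hc.2 c'.f (Karoubi.hom_eq_zero_iff.1 hc')
    refine ⟨⟨t ≫ R.p, by simp⟩, ?_⟩
    ext
    simp [reassoc_of% ht]

lemma hasPseudocokernels_karoubi (hpc : HasPseudocokernels C) : HasPseudocokernels (Karoubi C) :=
  fun _ _ α => by
    obtain ⟨Q₀, c, hc⟩ := hpc α.f
    exact ⟨_, _, isPseudocokernel_karoubi hc⟩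

lemma isPseudocokernel_of_toKaroubi {X Y : C} {f : X ⟶ Y} {R : Karoubi C}
    {c : (toKaroubi C).obj Y ⟶ R} (hc : IsPseudocokernel ((toKaroubi C).map f) c) :
    IsPseudocokernel f c.f := by
  refine ⟨Karoubi.hom_eq_zero_iff.1 hc.1, fun Q' c' hc' => ?_⟩
  obtain ⟨t, ht⟩ := hc.2 ((toKaroubi C).map c') (by ext; simpa using hc')
  exact ⟨t.f, by simpa using congrArg Karoubi.Hom.f ht⟩

lemma hasPseudocokernelsIn_karoubi_iff :
    HasPseudocokernelsIn (fun P : Karoubi C => B P.X) ↔ HasPseudocokernelsIn B := by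
  constructor
  · intro h X Y hX hY f
    obtain ⟨R, c, hR, hc⟩ := h (X := (toKaroubi C).obj X) (Y := (toKaroubi C).obj Y) hX hY
      ((toKaroubi C).map f)
    exact ⟨R.X, c.f, hR, isPseudocokernel_of_toKaroubi hc⟩
  · intro h P Q hP hQ α
    obtain ⟨Q₀, c, hQ₀, hc⟩ := h hP hQ α.f
    exact ⟨_, _, hQ₀, isPseudocokernel_karoubi hc⟩

end Karoubi

/-- Corollary 3.6: the idempotent completion `B̂` of `B` is coreflective in the
Karoubi envelope of `C` iff `B` is precovering and morphisms of `B` have pseudocokernels in `B`. -/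
theorem karoubi_coreflective_iff
    {C : Type u} [Category.{v} C] [Preadditive C]
    (hpk : HasPseudokernels C) (hpc : HasPseudocokernels C) (B : C → Prop) :
    IsCoreflectiveSub (fun P : Karoubi C => B P.X) ↔
      (Precovering B ∧
        ∀ ⦃X Y : C⦄, B X → B Y → ∀ f : X ⟶ Y,
          ∃ (Q : C) (c : Y ⟶ Q), B Q ∧ IsPseudocokernel f c) := by
  constructor
  · intro h
    exact ⟨precovering_karoubi_iff.1 h.precovering,
      hasPseudocokernelsIn_karoubi_iff.1 (h.hasPseudocokernelsIn (hasPseudocokernels_karoubi hpc))⟩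
  · rintro ⟨hprec, hpcB⟩
    exact isCoreflectiveSub_of_precovering (hasPseudokernels_karoubi hpk)
      (idempotentsSplitIn_karoubi B) (precovering_karoubi_iff.2 hprec)
      (hasPseudocokernelsIn_karoubi_iff.2 hpcB)

end PaperStmt
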